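/- Let g_1,...,g_n : ℝ → ℝ be integrable functions such that D_n := det[∫ x^{j-1} g_k(x) dx]_{j,k=1..n} ≠ 0. Then the function P(z) := (1/(D_n · n!)) ∫_{ℝ^n} ∏_{k=1}^n (z - x_k) · det[x_k^{j-1}]_{j,k} · det[g_j(x_k)]_{j,k} dx_1⋯dx_n is a monic polynomial of degree n in z satisfying the orthogonality conditions ∫ P(x) g_k(x) dx = 0 for k = 1,...,n. -/

import Mathlib

/-!
Expanding `det [F_j(x_k)]` over permutations and absorbing each product `∏_k F_{σ k}(x_k)` into
the columns of `det [G_j(x_k)]` turns the integrand into a signed sum of determinants whose `k`-th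
column depends on `x_k` alone; such a determinant integrates entrywise (Fubini), which gives
Andréief's identity `∫ det [F_j(x_k)] det [G_j(x_k)] dx = n! det [∫ F_j G_k]`.

With `F_j(t) = (z - t) t^j` and `G = g`, the integral defining `P` becomes `n! det (z A - B)`, where
`A = [∫ x^j g_k]` and `B = [∫ x^(j+1) g_k]`. Hence `P` is the characteristic polynomial of
`M = A⁻¹ B`, monic of degree `n`. The identity `A M = B` says that the moment rows
`μ_m = (∫ x^m g_k)_k` satisfy `μ_(m+1) = μ_m M` for `m < n`, so `μ_m = μ_0 M^m` for `m ≤ n`, and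
`∫ P(x) g_k(x) dx = (μ_0 P(M))_k = 0` by Cayley–Hamilton.
-/

open MeasureTheory Polynomial Matrix

section Andreief

variable {𝕜 α ι : Type*} [RCLike 𝕜] [MeasurableSpace α] {μ : Measure α} [SigmaFinite μ]
  [Fintype ι] [DecidableEq ι]

theorem integrable_det_columnwise (h : ι → ι → α → 𝕜) (hh : ∀ j k, Integrable (h j k) μ) :
    Integrable (fun x : ι → α => det (of fun j k => h j k (x k))) (Measure.pi fun _ => μ) := by
  simp only [det_apply', of_apply]
  exact integrable_finsetSum _ fun σ _ =>
    (Integrable.fintype_prod fun k => hh (σ k) k).const_mul _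

theorem integral_det_columnwise (h : ι → ι → α → 𝕜) (hh : ∀ j k, Integrable (h j k) μ) :
    ∫ x, det (of fun j k => h j k (x k)) ∂(Measure.pi fun _ => μ) =
      det (of fun j k => ∫ t, h j k t ∂μ) := by
  simp only [det_apply', of_apply]
  rw [integral_finsetSum _ fun σ _ => (Integrable.fintype_prod fun k => hh (σ k) k).const_mul _]
  refine Finset.sum_congr rfl fun σ _ => ?_
  rw [integral_const_mul, integral_fintype_prod_eq_prod (fun k t => h (σ k) k t)]

theorem integral_det_mul_det (F G : ι → α → 𝕜)
    (hFG : ∀ j k, Integrable (fun t => F j t * G k t) μ) :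
    ∫ x, det (of fun j k => F j (x k)) * det (of fun j k => G j (x k)) ∂(Measure.pi fun _ => μ) =
      (Fintype.card ι).factorial * det (of fun j k => ∫ t, F j t * G k t ∂μ) := by
  set C := of fun j k => ∫ t, F j t * G k t ∂μ
  have hexpand : ∀ x : ι → α, det (of fun j k => F j (x k)) * det (of fun j k => G j (x k)) =
      ∑ σ : Equiv.Perm ι,
        (Equiv.Perm.sign σ : 𝕜) * det (of fun j k => F (σ k) (x k) * G j (x k)) := by
    intro x
    rw [det_apply', Finset.sum_mul]
    refine Finset.sum_congr rfl fun σ _ => ?_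
    rw [mul_assoc, ← det_mul_row]
    rfl
  have hint : ∀ σ : Equiv.Perm ι,
      Integrable (fun x : ι → α => det (of fun j k => F (σ k) (x k) * G j (x k)))
        (Measure.pi fun _ => μ) :=
    fun σ => integrable_det_columnwise (fun j k t => F (σ k) t * G j t) fun _ _ => hFG _ _
  have hterm : ∀ σ : Equiv.Perm ι,
      ∫ x, (Equiv.Perm.sign σ : 𝕜) * det (of fun j k => F (σ k) (x k) * G j (x k))
        ∂(Measure.pi fun _ => μ) = det C := by
    intro σ
    rw [integral_const_mul,
      integral_det_columnwise (fun j k t => F (σ k) t * G j t) fun _ _ => hFG _ _,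
      show (of fun j k => ∫ t, F (σ k) t * G j t ∂μ) = Cᵀ.submatrix id σ from rfl,
      det_permute', det_transpose, ← mul_assoc, ← Int.cast_mul, Int.units_coe_mul_self,
      Int.cast_one, one_mul]
  simp_rw [hexpand]
  rw [integral_finsetSum _ fun σ _ => (hint σ).const_mul _]
  simp [hterm, Fintype.card_perm]

end Andreief

section CayleyHamilton

variable {R ι : Type*} [CommRing R] [Fintype ι] [DecidableEq ι]

theorem det_smul_sub_eq_det_mul_eval_charpoly {A : Matrix ι ι R} (hA : IsUnit A.det)
    (B : Matrix ι ι R) (z : R) :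
    det (z • A - B) = det A * (A⁻¹ * B).charpoly.eval z := by
  rw [eval_charpoly, ← det_mul, Matrix.mul_sub, mul_nonsing_inv_cancel_left _ _ hA,
    scalar_apply, ← smul_one_eq_diagonal, Matrix.mul_smul, mul_one]

theorem eq_vecMul_pow_of_mul_eq_shift {n : ℕ} (v : ℕ → Fin n → R) (M : Matrix (Fin n) (Fin n) R)
    (h : (of fun j k : Fin n => v j k) * M = of fun j k : Fin n => v (j + 1) k) :
    ∀ m ≤ n, v m = v 0 ᵥ* M ^ m := by
  intro m
  induction m with
  | zero => simp
  | succ m ih =>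
    intro hm
    have hrow : v (m + 1) = v m ᵥ* M := by
      funext k
      simpa [mul_apply, vecMul, dotProduct] using (congrFun (congrFun h ⟨m, hm⟩) k).symm
    rw [hrow, ih (by omega), vecMul_vecMul, pow_succ]

theorem sum_coeff_smul_eq_vecMul_aeval (p : R[X]) (v : ℕ → ι → R) (M : Matrix ι ι R)
    (hv : ∀ m ≤ p.natDegree, v m = v 0 ᵥ* M ^ m) :
    ∑ m ∈ Finset.range (p.natDegree + 1), p.coeff m • v m = v 0 ᵥ* aeval M p := by
  rw [aeval_eq_sum_range, vecMul_sum]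
  refine Finset.sum_congr rfl fun m hm => ?_
  rw [vecMul_smul, ← hv m (Nat.lt_succ_iff.mp (Finset.mem_range.mp hm))]

end CayleyHamilton

theorem integral_eval_mul_eq_sum {μ : Measure ℝ} (p : ℝ[X]) (g : ℝ → ℝ)
    (hg : ∀ m ≤ p.natDegree, Integrable (fun x => x ^ m * g x) μ) :
    ∫ x, p.eval x * g x ∂μ =
      ∑ m ∈ Finset.range (p.natDegree + 1), p.coeff m * ∫ x, x ^ m * g x ∂μ := by
  simp_rw [eval_eq_sum_range, Finset.sum_mul, mul_assoc]
  rw [integral_finsetSum _ fun m hm =>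
    (hg m (Nat.lt_succ_iff.mp (Finset.mem_range.mp hm))).const_mul _]
  simp_rw [integral_const_mul]

noncomputable def momentMatrix {n : ℕ} (g : Fin n → ℝ → ℝ) (s : ℕ) : Matrix (Fin n) (Fin n) ℝ :=
  of fun j k => ∫ x, x ^ ((j : ℕ) + s) * g k x

theorem integral_prod_sub_mul_det_pow_mul_det {n : ℕ} (g : Fin n → ℝ → ℝ)
    (hg : ∀ k, ∀ m ≤ n, Integrable (fun x => x ^ m * g k x)) (z : ℝ) :
    ∫ x : Fin n → ℝ, (∏ k, (z - x k)) *
        (det (of fun j k : Fin n => x k ^ (j : ℕ)) * det (of fun j k : Fin n => g j (x k))) =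
      n.factorial * det (z • momentMatrix g 0 - momentMatrix g 1) := by
  have hsplit : ∀ j k : Fin n, (fun t => (z - t) * t ^ (j : ℕ) * g k t) =
      fun t => z * (t ^ (j : ℕ) * g k t) - t ^ ((j : ℕ) + 1) * g k t :=
    fun j k => funext fun t => by ring
  have hint : ∀ j k : Fin n, Integrable (fun t => (z - t) * t ^ (j : ℕ) * g k t) := fun j k => by
    rw [hsplit]
    exact ((hg k j j.is_lt.le).const_mul z).sub (hg k (j + 1) j.is_lt)
  calc _ = ∫ x : Fin n → ℝ, det (of fun j k : Fin n => (z - x k) * x k ^ (j : ℕ)) *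
          det (of fun j k : Fin n => g j (x k)) := by
        congr 1
        funext x
        rw [← mul_assoc, ← det_mul_row]
        rfl
    _ = n.factorial * det (of fun j k : Fin n => ∫ t, (z - t) * t ^ (j : ℕ) * g k t) := by
        rw [volume_pi, integral_det_mul_det (fun (j : Fin n) t => (z - t) * t ^ (j : ℕ)) g hint,
          Fintype.card_fin]
    _ = n.factorial * det (z • momentMatrix g 0 - momentMatrix g 1) := by
        congr 2
        ext j k
        rw [of_apply, hsplit, integral_sub ((hg k j j.is_lt.le).const_mul z) (hg k (j + 1) j.is_lt),
          integral_const_mul]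
        rfl

theorem mop_multiple_integral_is_monic_orthogonal_general (n : ℕ) (g : Fin n → ℝ → ℝ)
    (hint : ∀ (k : Fin n) (m : ℕ), m ≤ n → Integrable (fun x : ℝ => x ^ m * g k x))
    (D : ℝ) (hD : D = Matrix.det (Matrix.of fun j k : Fin n => ∫ x : ℝ, x ^ (j : ℕ) * g k x))
    (hD0 : D ≠ 0)
    (P : ℝ → ℝ)
    (hP : P = fun z : ℝ =>
      (1 / (D * (Nat.factorial n : ℝ))) *
        ∫ x : Fin n → ℝ,
          (∏ k : Fin n, (z - x k)) *
            (Matrix.det (Matrix.of fun j k : Fin n => (x k) ^ (j : ℕ)) *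
             Matrix.det (Matrix.of fun j k : Fin n => g j (x k)))) :
    ∃ Q : Polynomial ℝ, Q.Monic ∧ Q.natDegree = n ∧ (∀ z : ℝ, P z = Q.eval z) ∧
      ∀ k : Fin n, ∫ x : ℝ, Q.eval x * g k x = 0 := by
  have hD' : D = det (momentMatrix g 0) := hD
  have hA : IsUnit (momentMatrix g 0).det := hD' ▸ hD0.isUnit
  set M := (momentMatrix g 0)⁻¹ * momentMatrix g 1
  have hcharpoly : ∀ z, det (z • momentMatrix g 0 - momentMatrix g 1) =
      det (momentMatrix g 0) * M.charpoly.eval z :=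
    det_smul_sub_eq_det_mul_eval_charpoly hA _
  have hdeg : M.charpoly.natDegree = n := by simp
  refine ⟨M.charpoly, M.charpoly_monic, hdeg, fun z => ?_, fun k => ?_⟩
  · subst hP
    dsimp only
    rw [integral_prod_sub_mul_det_pow_mul_det g hint z, hcharpoly, ← hD']
    field_simp
  · have hmoments := eq_vecMul_pow_of_mul_eq_shift (fun m k => ∫ x, x ^ m * g k x) M
      (mul_nonsing_inv_cancel_left _ _ hA)
    rw [integral_eval_mul_eq_sum _ _ fun m hm => hint k m (hdeg ▸ hm)]
    simpa [aeval_self_charpoly] using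
      congrFun (sum_coeff_smul_eq_vecMul_aeval _ _ M fun m hm => hmoments m (hdeg ▸ hm)) k

/-- The multiple integral representation
`P(z) = (1/(D_n n!)) ∫_{ℝ^n} ∏_k (z - x_k) · det[x_k^{j-1}] · det[g_j(x_k)] dx`
defines a monic polynomial of degree `n` satisfying the orthogonality conditions
`∫ P(x) g_k(x) dx = 0` for all `k`. -/
theorem mop_multiple_integral_is_monic_orthogonal (n : ℕ) (g : Fin n → ℝ → ℝ)
    (hint : ∀ (k : Fin n) (m : ℕ), m ≤ n → Integrable (fun x : ℝ => x ^ m * g k x))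
    (habs : ∀ z : ℝ, Integrable (fun x : Fin n → ℝ =>
      (∏ k : Fin n, (z - x k)) *
        (Matrix.det (Matrix.of fun j k : Fin n => (x k) ^ (j : ℕ)) *
         Matrix.det (Matrix.of fun j k : Fin n => g j (x k)))))
    (D : ℝ) (hD : D = Matrix.det (Matrix.of fun j k : Fin n => ∫ x : ℝ, x ^ (j : ℕ) * g k x))
    (hD0 : D ≠ 0)
    (P : ℝ → ℝ)
    (hP : P = fun z : ℝ =>
      (1 / (D * (Nat.factorial n : ℝ))) *
        ∫ x : Fin n → ℝ,
          (∏ k : Fin n, (z - x k)) *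
            (Matrix.det (Matrix.of fun j k : Fin n => (x k) ^ (j : ℕ)) *
             Matrix.det (Matrix.of fun j k : Fin n => g j (x k)))) :
    ∃ Q : Polynomial ℝ, Q.Monic ∧ Q.natDegree = n ∧ (∀ z : ℝ, P z = Q.eval z) ∧
      ∀ k : Fin n, ∫ x : ℝ, Q.eval x * g k x = 0 :=
  mop_multiple_integral_is_monic_orthogonal_general n g hint D hD hD0 P hP
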